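/- arXiv:2510.26169 — 3 statements merged into one kernel-verified Lean document; each statement's English description precedes it below -/
import Mathlib

section
/- Given positive integers $r_1 \le r_2 \le \cdots \le r_{q+1}$, let $G_1$ be a graph containing no $K_2(r_1, r_2)$, and for $2 \le i \le q$ let $G_i$ be graphs containing none of $K_2(1, r_2)$, $K_2(2,2)$, and $K_3(1,1,1)$. Then the join $G_1 \vee G_2 \vee \cdots \vee G_q$ contains no copy of the complete $(q+1)$-partite graph $K_{q+1}(r_1, \ldots, r_{q+1})$. -/
open SimpleGraph Finset

/-- `F` is contained in `G` as a subgraph (an injective adjacency-preserving map). -/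
def containsCopy {α β : Type*} (F : SimpleGraph α) (G : SimpleGraph β) : Prop :=
  ∃ f : α ↪ β, ∀ a b, F.Adj a b → G.Adj (f a) (f b)

/-- For even `d` this is the cocktail party graph `CP_d` (complete graph minus the
perfect matching pairing `2j, 2j+1`); for odd `d` it is the odd cocktail party graph
`L_d = CP_{d-1} ∨ K_1`. -/
def cocktail (d : ℕ) : SimpleGraph (Fin d) :=
  SimpleGraph.fromRel (fun i j => (i : ℕ) / 2 ≠ (j : ℕ) / 2)

/-- `S` is a dissociation set of `G`: every vertex of `S` has at most one neighbor in `S`. -/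
def IsDissocSet {V : Type*} (G : SimpleGraph V) (S : Finset V) : Prop :=
  ∀ v ∈ S, ({u | u ∈ S ∧ G.Adj v u}).ncard ≤ 1

/-- The dissociation number of `G`. -/
noncomputable def dissocNum {V : Type*} [Fintype V] (G : SimpleGraph V) : ℕ :=
  sSup {k | ∃ S : Finset V, IsDissocSet G S ∧ S.card = k}

lemma copy_trans {α β γ : Type*} {F : SimpleGraph α} {H : SimpleGraph β} {H' : SimpleGraph γ}
    (ψ : β ↪ γ) (hψ : ∀ a b, H.Adj a b → H'.Adj (ψ a) (ψ b)) :
    containsCopy F H → containsCopy F H' := by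
  rintro ⟨f, hf⟩
  exact ⟨f.trans ψ, fun a b h => hψ _ _ (hf a b h)⟩

lemma sigma_snd_eq {m : ℕ} {g : Fin m → ℕ} {j : Fin m} {x y : Fin (g j)}
    (h : (⟨j, x⟩ : Σ i, Fin (g i)) = ⟨j, y⟩) : x = y :=
  eq_of_heq (Sigma.mk.inj_iff.mp h).2

lemma finset_pick {α : Type*} {k : ℕ} (A : Finset α) (h : k ≤ A.card) :
    ∃ φ : Fin k → α, Function.Injective φ ∧ ∀ i, φ i ∈ A := by
  refine ⟨fun i => (A.equivFin.symm (Fin.castLE h i)).1, fun x y hxy => ?_,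
    fun i => (A.equivFin.symm _).2⟩
  have h2 := A.equivFin.symm.injective (Subtype.ext hxy)
  exact Fin.castLE_injective h h2

lemma biclique_helper {V : Type*} (G : SimpleGraph V) (s : Set V) {m k : ℕ}
    (φ : Fin m → V) (ψ : Fin k → V) (hφ : Function.Injective φ) (hψ : Function.Injective ψ)
    (hφs : ∀ i, φ i ∈ s) (hψs : ∀ j, ψ j ∈ s)
    (hd : ∀ i j, φ i ≠ ψ j)
    (ha : ∀ i j, G.Adj (φ i) (ψ j)) :
    containsCopy (completeBipartiteGraph (Fin m) (Fin k)) (G.induce s) := by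
  refine ⟨⟨Sum.elim (fun i => ⟨φ i, hφs i⟩) (fun j => ⟨ψ j, hψs j⟩), ?_⟩, ?_⟩
  · rintro (i|i) (j|j) h <;> simp only [Sum.elim_inl, Sum.elim_inr, Subtype.mk.injEq] at h
    · exact congrArg _ (hφ h)
    · exact absurd h (hd i j)
    · exact absurd h.symm (hd j i)
    · exact congrArg _ (hψ h)
  · rintro (i|i) (j|j) h
    · simp at h
    · exact ha i j
    · exact (ha j i).symm
    · simp at h

lemma triangle_helper {V : Type*} (G : SimpleGraph V) (s : Set V) (v0 v1 v2 : V)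
    (h0 : v0 ∈ s) (h1 : v1 ∈ s) (h2 : v2 ∈ s)
    (h01 : G.Adj v0 v1) (h02 : G.Adj v0 v2) (h12 : G.Adj v1 v2) :
    containsCopy (⊤ : SimpleGraph (Fin 3)) (G.induce s) := by
  refine ⟨⟨![⟨v0, h0⟩, ⟨v1, h1⟩, ⟨v2, h2⟩], ?_⟩, ?_⟩
  · intro a b hab
    fin_cases a <;> fin_cases b <;> simp_all [Subtype.ext_iff]
  · intro a b hab
    fin_cases a <;> fin_cases b <;> simp_all <;>
      first
      | exact h01 | exact h02 | exact h12 | exact h01.symm | exact h02.symm | exact h12.symm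

lemma Fin_castSucc_le_succAbove {m : ℕ} (p : Fin (m + 1)) (i : Fin m) :
    (Fin.castSucc i) ≤ p.succAbove i := by
  rw [Fin.succAbove]
  split
  · exact le_rfl
  · exact Fin.castSucc_lt_succ.le

theorem aux (q : ℕ) (hq : 1 ≤ q) : ∀ (r : Fin (q + 1) → ℕ), (∀ i, 1 ≤ r i) → Monotone r →
    ∀ {V : Type u} (G : SimpleGraph V) (p : V → Fin q),
    (∀ x y : V, p x ≠ p y → G.Adj x y) →
    (¬ containsCopy (completeBipartiteGraph (Fin (r 0)) (Fin (r 1)))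
      (G.induce {x | p x = ⟨0, hq⟩})) →
    (∀ i : Fin q, i ≠ ⟨0, hq⟩ →
      ¬ containsCopy (completeBipartiteGraph (Fin 1) (Fin (r 1)))
          (G.induce {x | p x = i}) ∧
      ¬ containsCopy (completeBipartiteGraph (Fin 2) (Fin 2))
          (G.induce {x | p x = i}) ∧
      ¬ containsCopy (⊤ : SimpleGraph (Fin 3)) (G.induce {x | p x = i})) →
    ¬ containsCopy (completeMultipartiteGraph (fun i : Fin (q + 1) => Fin (r i))) G := by
  induction q, hq using Nat.le_induction with
  | base =>
    intro r hpos hmono V G p hcross h1 hrest ⟨f, hf⟩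
    have hadj : ∀ (a b : Σ j : Fin 2, Fin (r j)), a.1 ≠ b.1 → G.Adj (f a) (f b) :=
      fun a b h => hf a b h
    apply h1
    refine biclique_helper G _ (fun a => f ⟨0, a⟩) (fun b => f ⟨1, b⟩)
      (fun x y h => sigma_snd_eq (f.injective h))
      (fun x y h => sigma_snd_eq (f.injective h))
      (fun a => Subsingleton.elim _ _) (fun b => Subsingleton.elim _ _)
      (fun a b h => absurd (congrArg Sigma.fst (f.injective h)) (show ¬(0 : Fin 2) = 1 by decide))
      (fun a b => hadj _ _ (show (0 : Fin 2) ≠ 1 by decide))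
  | succ n hn IH =>
    intro r hpos hmono V G p hcross h1 hrest ⟨f, hf⟩
    classical
    have hadj : ∀ (a b : Σ j : Fin (n + 2), Fin (r j)), a.1 ≠ b.1 → G.Adj (f a) (f b) :=
      fun a b h => hf a b h
    set L : Fin (n + 1) := Fin.last n with hLdef
    have hL0 : L ≠ (⟨0, Nat.le_add_left 1 n⟩ : Fin (n + 1)) := by
      refine Fin.ne_of_val_ne ?_
      show n ≠ 0
      omega
    set T : Finset (Fin (n + 2)) :=
      Finset.univ.filter (fun j => ∃ a : Fin (r j), p (f ⟨j, a⟩) = L) with hTdef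
    have hTmem : ∀ j, j ∈ T ↔ ∃ a : Fin (r j), p (f ⟨j, a⟩) = L := by
      intro j; simp [hTdef]
    -- the common final step
    have main : ∀ H : (Σ i : Fin (n + 1), Fin (r (Fin.castSucc i))) → (Σ j : Fin (n + 2), Fin (r j)),
        Function.Injective H → (∀ x y, x.1 ≠ y.1 → (H x).1 ≠ (H y).1) →
        (∀ x, p (f (H x)) ≠ L) → False := by
      intro H Hinj Hcross Havoid
      set r' : Fin (n + 1) → ℕ := fun i => r (Fin.castSucc i) with hr'def
      have e0 : r' 0 = r 0 := congrArg r Fin.castSucc_zero'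
      have e1 : r' 1 = r 1 := by
        refine congrArg r (Fin.ext ?_)
        show ((1 : Fin (n + 1)).castSucc).val = (1 : Fin (n + 1 + 1)).val
        simp only [Fin.coe_castSucc, Fin.val_one']
        rw [Nat.mod_eq_of_lt (by omega), Nat.mod_eq_of_lt (by omega)]
      set Vs : Set V := {x | p x ≠ L} with hVsdef
      set G' : SimpleGraph Vs := G.induce Vs with hG'def
      set p' : Vs → Fin n := fun x => (p x.1).castPred x.2 with hp'def
      have hpp' : ∀ (x : Vs) (i : Fin n), p' x = i ↔ p x.1 = Fin.castSucc i := by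
        intro x i
        simp only [hp'def]
        exact Fin.castPred_eq_iff_eq_castSucc _ _ _
      refine IH r' (fun i => hpos _) (fun i j hij => hmono (Fin.castSucc_le_castSucc_iff.mpr hij))
        G' p' ?_ ?_ ?_ ⟨⟨fun x => ⟨f (H x), Havoid x⟩, ?_⟩, ?_⟩
      · -- cross
        intro x y hxy
        refine hcross x.1 y.1 (fun h => hxy ?_)
        have h' := congrArg Fin.val h
        exact Fin.ext h'
      · -- h1
        intro hc
        apply h1
        rw [e0, e1] at hc
        refine copy_trans
          ⟨fun x => ⟨x.1.1, ((hpp' x.1 ⟨0, hn⟩).mp x.2).trans (Fin.ext rfl)⟩,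
            fun a b hab => ?_⟩
          (fun a b h => h) hc
        have h' := congrArg Subtype.val hab
        exact Subtype.ext (Subtype.ext h')
      · -- hrest
        intro i hi
        have hic : (Fin.castSucc i) ≠ (⟨0, Nat.le_add_left 1 n⟩ : Fin (n + 1)) := by
          intro h
          refine hi (Fin.ext ?_)
          have h' := congrArg Fin.val h
          exact h'
        obtain ⟨o1, o2, o3⟩ := hrest (Fin.castSucc i) hic
        have hψ : ∀ hc' : Function.Injective
            (fun x : {x : Vs | p' x = i} => (⟨x.1.1, (hpp' x.1 i).mp x.2⟩ : {x : V | p x = Fin.castSucc i})),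
            True := fun _ => trivial
        have hinj : Function.Injective
            (fun x : {x : Vs | p' x = i} =>
              (⟨x.1.1, (hpp' x.1 i).mp x.2⟩ : {x : V | p x = Fin.castSucc i})) := by
          intro a b hab
          have h' := congrArg Subtype.val hab
          exact Subtype.ext (Subtype.ext h')
        refine ⟨fun hc => o1 ?_, fun hc => o2 ?_, fun hc => o3 ?_⟩
        · rw [e1] at hc
          exact copy_trans ⟨_, hinj⟩ (fun a b h => h) hc
        · exact copy_trans ⟨_, hinj⟩ (fun a b h => h) hc
        · exact copy_trans ⟨_, hinj⟩ (fun a b h => h) hc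
      · -- injectivity of the new embedding
        intro x y hxy
        have h' := congrArg Subtype.val hxy
        exact Hinj (f.injective h')
      · -- adjacency
        intro a b hab
        exact hadj _ _ (Hcross a b hab)
    -- now the case analysis on T.card
    rcases le_or_gt 3 T.card with hT3 | hTlt
    · -- triangle case
      obtain ⟨a, ha, b, hb, hab⟩ := Finset.one_lt_card.mp (show 1 < T.card by omega)
      have hbe : b ∈ T.erase a := Finset.mem_erase.mpr ⟨fun h => hab h.symm, hb⟩
      have hne : ((T.erase a).erase b).Nonempty := by
        rw [← Finset.card_pos, Finset.card_erase_of_mem hbe, Finset.card_erase_of_mem ha]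
        omega
      obtain ⟨c, hc⟩ := hne
      obtain ⟨hcb, hca, hcT⟩ : c ≠ b ∧ c ≠ a ∧ c ∈ T := by
        have h1' := Finset.mem_erase.mp hc
        have h2' := Finset.mem_erase.mp h1'.2
        exact ⟨h1'.1, h2'.1, h2'.2⟩
      obtain ⟨va, hva⟩ := (hTmem a).mp ha
      obtain ⟨vb, hvb⟩ := (hTmem b).mp hb
      obtain ⟨vc, hvc⟩ := (hTmem c).mp hcT
      exact (hrest L hL0).2.2 (triangle_helper G _ _ _ _ hva hvb hvc
        (hadj _ _ hab) (hadj _ _ (Ne.symm hca)) (hadj _ _ (Ne.symm hcb)))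
    · rcases Nat.lt_or_ge T.card 2 with hT1 | hT2
      · -- at most one part meets L : drop that part
        obtain ⟨j₀, hj₀⟩ : ∃ j₀ : Fin (n + 2), ∀ j, j ≠ j₀ → ∀ a : Fin (r j), p (f ⟨j, a⟩) ≠ L := by
          by_cases hne : T.Nonempty
          · refine ⟨hne.choose, fun j hj a hpa => ?_⟩
            have hjT : j ∈ T := (hTmem j).mpr ⟨a, hpa⟩
            exact hj (Finset.card_le_one.mp (show T.card ≤ 1 by omega) j hjT _ hne.choose_spec)
          · exact ⟨0, fun j hj a hpa => hne ⟨j, (hTmem j).mpr ⟨a, hpa⟩⟩⟩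
        refine main (fun x => ⟨j₀.succAbove x.1, Fin.castLE (hmono (Fin_castSucc_le_succAbove j₀ x.1)) x.2⟩)
          ?_ ?_ ?_
        · rintro ⟨i, a⟩ ⟨j, b⟩ hxy
          beta_reduce at hxy
          have h1' := congrArg Sigma.fst hxy
          have hij : i = j := Fin.succAbove_right_injective h1'
          subst hij
          have h2' := sigma_snd_eq hxy
          have h3' := congrArg Fin.val h2'
          have : a = b := Fin.ext h3'
          rw [this]
        · intro x y h hc
          beta_reduce at hc
          exact h (Fin.succAbove_right_injective hc)
        · intro x
          exact hj₀ _ (Fin.succAbove_ne j₀ x.1) _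
      · -- exactly two parts meet L : merge them
        have hT2' : T.card = 2 := by omega
        obtain ⟨j₁, j₂, hlt, hTeq⟩ : ∃ j₁ j₂ : Fin (n + 2), j₁ < j₂ ∧ T = {j₁, j₂} := by
          obtain ⟨a, b, hab, hTeq⟩ := Finset.card_eq_two.mp hT2'
          rcases hab.lt_or_gt with h | h
          · exact ⟨a, b, h, hTeq⟩
          · exact ⟨b, a, h, by rw [hTeq, Finset.pair_comm]⟩
        set A : Finset (Fin (r j₁)) := Finset.univ.filter (fun a => p (f ⟨j₁, a⟩) = L) with hAdef
        set B : Finset (Fin (r j₂)) := Finset.univ.filter (fun a => p (f ⟨j₂, a⟩) = L) with hBdef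
        have hAmem : ∀ a, a ∈ A ↔ p (f ⟨j₁, a⟩) = L := by intro a; simp [hAdef]
        have hBmem : ∀ a, a ∈ B ↔ p (f ⟨j₂, a⟩) = L := by intro a; simp [hBdef]
        have hAne : A.Nonempty := by
          obtain ⟨a, ha⟩ := (hTmem j₁).mp (by rw [hTeq]; simp)
          exact ⟨a, (hAmem a).mpr ha⟩
        have hBne : B.Nonempty := by
          obtain ⟨a, ha⟩ := (hTmem j₂).mp (by rw [hTeq]; simp)
          exact ⟨a, (hBmem a).mpr ha⟩
        have hout : ∀ (j : Fin (n + 2)) (a : Fin (r j)), j ≠ j₁ → j ≠ j₂ → p (f ⟨j, a⟩) ≠ L := by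
          intro j a h1' h2' hpa
          have hjT : j ∈ T := (hTmem j).mpr ⟨a, hpa⟩
          rw [hTeq] at hjT
          simp at hjT
          tauto
        have h1le : (1 : Fin (n + 2)) ≤ j₂ := by
          rw [Fin.le_def]
          have hv := hlt
          rw [Fin.lt_def] at hv
          have hmod : (1 : Fin (n + 1 + 1)).val = 1 := by
            rw [Fin.val_one']
            exact Nat.mod_eq_of_lt (by omega)
          rw [hmod]
          omega
        have haA : A.card ≤ r j₁ := le_trans (Finset.card_le_univ A) (by simp)
        have haB : B.card ≤ r j₂ := le_trans (Finset.card_le_univ B) (by simp)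
        -- the key cardinality bound
        have hABle : A.card + B.card ≤ r 1 := by
          by_contra hgt
          push_neg at hgt
          have h22 : ¬(2 ≤ A.card ∧ 2 ≤ B.card) := by
            rintro ⟨hA2, hB2⟩
            obtain ⟨uA, huAinj, huAmem⟩ := finset_pick A hA2
            obtain ⟨uB, huBinj, huBmem⟩ := finset_pick B hB2
            apply (hrest L hL0).2.1
            refine biclique_helper G _ (fun k => f ⟨j₁, uA k⟩) (fun k => f ⟨j₂, uB k⟩)
              ?_ ?_ ?_ ?_ ?_ ?_
            · intro x y h
              exact huAinj (sigma_snd_eq (f.injective h))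
            · intro x y h
              exact huBinj (sigma_snd_eq (f.injective h))
            · intro k
              exact (hAmem _).mp (huAmem k)
            · intro k
              exact (hBmem _).mp (huBmem k)
            · intro x y h
              exact hlt.ne (congrArg Sigma.fst (f.injective h))
            · intro x y
              exact hadj _ _ hlt.ne
          have hA1 : 1 ≤ A.card := hAne.card_pos
          have hB1 : 1 ≤ B.card := hBne.card_pos
          rcases not_and_or.mp h22 with hs | hs
          · -- A.card = 1, B.card ≥ r 1 : K_{1, r 1} centered in part j₁
            have hBcard : r 1 ≤ B.card := by omega
            obtain ⟨a₀, ha₀⟩ := hAne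
            obtain ⟨uB, huBinj, huBmem⟩ := finset_pick B hBcard
            apply (hrest L hL0).1
            refine biclique_helper G _ (fun _ : Fin 1 => f ⟨j₁, a₀⟩) (fun k => f ⟨j₂, uB k⟩)
              (fun x y _ => Subsingleton.elim x y) ?_ ?_ ?_ ?_ ?_
            · intro x y h
              exact huBinj (sigma_snd_eq (f.injective h))
            · intro k
              exact (hAmem _).mp ha₀
            · intro k
              exact (hBmem _).mp (huBmem k)
            · intro x y h
              exact hlt.ne (congrArg Sigma.fst (f.injective h))
            · intro x y
              exact hadj _ _ hlt.ne
          · -- B.card = 1, A.card ≥ r 1 : K_{1, r 1} centered in part j₂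
            have hAcard : r 1 ≤ A.card := by omega
            obtain ⟨b₀, hb₀⟩ := hBne
            obtain ⟨uA, huAinj, huAmem⟩ := finset_pick A hAcard
            apply (hrest L hL0).1
            refine biclique_helper G _ (fun _ : Fin 1 => f ⟨j₂, b₀⟩) (fun k => f ⟨j₁, uA k⟩)
              (fun x y _ => Subsingleton.elim x y) ?_ ?_ ?_ ?_ ?_
            · intro x y h
              exact huAinj (sigma_snd_eq (f.injective h))
            · intro k
              exact (hBmem _).mp hb₀
            · intro k
              exact (hAmem _).mp (huAmem k)
            · intro x y h
              exact hlt.ne.symm (congrArg Sigma.fst (f.injective h))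
            · intro x y
              exact hadj _ _ hlt.ne.symm
        -- build the merged complement set C
        set C : Finset (Σ j : Fin (n + 2), Fin (r j)) :=
          (Aᶜ).image (fun a => (⟨j₁, a⟩ : Σ j : Fin (n + 2), Fin (r j))) ∪
          (Bᶜ).image (fun b => (⟨j₂, b⟩ : Σ j : Fin (n + 2), Fin (r j))) with hCdef
        have hCmem : ∀ x ∈ C, (x.1 = j₁ ∨ x.1 = j₂) ∧ p (f x) ≠ L := by
          intro x hx
          rw [hCdef, Finset.mem_union] at hx
          rcases hx with hx | hx
          · obtain ⟨a, ha, rfl⟩ := Finset.mem_image.mp hx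
            have ha' : a ∉ A := Finset.mem_compl.mp ha
            exact ⟨Or.inl rfl, fun hpa => ha' ((hAmem a).mpr hpa)⟩
          · obtain ⟨b, hb, rfl⟩ := Finset.mem_image.mp hx
            have hb' : b ∉ B := Finset.mem_compl.mp hb
            exact ⟨Or.inr rfl, fun hpb => hb' ((hBmem b).mpr hpb)⟩
        have hCcard : r j₁ ≤ C.card := by
          have hdis : Disjoint ((Aᶜ).image (fun a => (⟨j₁, a⟩ : Σ j : Fin (n + 2), Fin (r j))))
              ((Bᶜ).image (fun b => (⟨j₂, b⟩ : Σ j : Fin (n + 2), Fin (r j)))) := by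
            rw [Finset.disjoint_left]
            intro x hx hx'
            obtain ⟨a, _, rfl⟩ := Finset.mem_image.mp hx
            obtain ⟨b, _, hb⟩ := Finset.mem_image.mp hx'
            exact hlt.ne (congrArg Sigma.fst hb).symm
          rw [hCdef, Finset.card_union_of_disjoint hdis,
            Finset.card_image_of_injective _ (fun x y h => sigma_snd_eq h),
            Finset.card_image_of_injective _ (fun x y h => sigma_snd_eq h),
            Finset.card_compl, Finset.card_compl]
          simp only [Fintype.card_fin]
          have hr2 : r 1 ≤ r j₂ := hmono h1le
          omega
        obtain ⟨u, hu_inj, huC⟩ := finset_pick C hCcard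
        have hj₁last : j₁ ≠ Fin.last (n + 1) :=
          fun h => absurd (h ▸ hlt) (not_lt.mpr (Fin.le_last j₂))
        set pj : Fin (n + 1) := j₁.castPred hj₁last with hpjdef
        have hpj : Fin.castSucc pj = j₁ := Fin.castSucc_castPred _ _
        have hrpj : ∀ i : Fin (n + 1), i = pj → r (Fin.castSucc i) = r j₁ := by
          intro i h; rw [h, hpj]
        have hsj : ∀ i : Fin (n + 1), j₂.succAbove i = j₁ → i = pj := by
          intro i hi
          have hv : (j₂.succAbove i).val = i.val ∨
              ((j₂.succAbove i).val = i.val + 1 ∧ j₂.val ≤ i.val) := by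
            rw [Fin.succAbove]
            split
            · exact Or.inl rfl
            · refine Or.inr ⟨rfl, ?_⟩
              rename_i hcond
              rw [Fin.lt_def] at hcond
              simpa using Nat.le_of_not_lt hcond
          have hiv := congrArg Fin.val hi
          have hj₁v : pj.val = j₁.val := rfl
          rw [Fin.lt_def] at hlt
          apply Fin.ext
          rcases hv with h | ⟨h, h'⟩
          · omega
          · omega
        set Hfun : (Σ i : Fin (n + 1), Fin (r (Fin.castSucc i))) → (Σ j : Fin (n + 2), Fin (r j)) :=
          fun x => if h : x.1 = pj then u (Fin.cast (hrpj x.1 h) x.2)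
            else ⟨j₂.succAbove x.1, Fin.castLE (hmono (Fin_castSucc_le_succAbove j₂ x.1)) x.2⟩
          with hHdef
        have hHpos : ∀ (x : Σ i : Fin (n + 1), Fin (r (Fin.castSucc i))) (h : x.1 = pj),
            Hfun x = u (Fin.cast (hrpj x.1 h) x.2) := by
          intro x h
          simp only [hHdef]
          rw [dif_pos h]
        have hHneg : ∀ (x : Σ i : Fin (n + 1), Fin (r (Fin.castSucc i))) (h : ¬ x.1 = pj),
            Hfun x = ⟨j₂.succAbove x.1, Fin.castLE (hmono (Fin_castSucc_le_succAbove j₂ x.1)) x.2⟩ := by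
          intro x h
          simp only [hHdef]
          rw [dif_neg h]
        have Hcross : ∀ x y, x.1 ≠ y.1 → (Hfun x).1 ≠ (Hfun y).1 := by
          intro x y hne
          by_cases hx : x.1 = pj <;> by_cases hy : y.1 = pj
          · exact absurd (hx.trans hy.symm) hne
          · rw [hHpos x hx, hHneg y hy]
            rcases (hCmem _ (huC _)).1 with h' | h'
            · rw [h']
              intro e
              exact hy (hsj y.1 e.symm)
            · rw [h']
              exact fun e => (Fin.succAbove_ne j₂ y.1) e.symm
          · rw [hHneg x hx, hHpos y hy]
            rcases (hCmem _ (huC _)).1 with h' | h'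
            · rw [h']
              intro e
              exact hx (hsj x.1 e)
            · rw [h']
              exact Fin.succAbove_ne j₂ x.1
          · rw [hHneg x hx, hHneg y hy]
            exact fun e => hne (Fin.succAbove_right_injective e)
        have Hinj : Function.Injective Hfun := by
          intro x y hxy
          have hfst : x.1 = y.1 := by
            by_contra hne
            exact Hcross x y hne (congrArg Sigma.fst hxy)
          obtain ⟨i, a⟩ := x
          obtain ⟨j, b⟩ := y
          simp only at hfst
          subst hfst
          by_cases h : i = pj
          · rw [hHpos ⟨i, a⟩ h, hHpos ⟨i, b⟩ h] at hxy
            have h2 := hu_inj hxy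
            have h3 := congrArg Fin.val h2
            have : a = b := Fin.ext h3
            rw [this]
          · rw [hHneg ⟨i, a⟩ h, hHneg ⟨i, b⟩ h] at hxy
            have h2 := sigma_snd_eq hxy
            have h3 := congrArg Fin.val h2
            have : a = b := Fin.ext h3
            rw [this]
        have Havoid : ∀ x, p (f (Hfun x)) ≠ L := by
          intro x
          by_cases h : x.1 = pj
          · rw [hHpos x h]
            exact (hCmem _ (huC _)).2
          · rw [hHneg x h]
            exact hout _ _ (fun e => h (hsj x.1 e)) (Fin.succAbove_ne j₂ x.1)
        exact main Hfun Hinj Hcross Havoid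

theorem stmt17 (q : ℕ) (hq : 1 ≤ q) (r : Fin (q + 1) → ℕ) (hpos : ∀ i, 1 ≤ r i)
    (hmono : Monotone r) {V : Type*} (G : SimpleGraph V) (p : V → Fin q)
    (hcross : ∀ x y : V, p x ≠ p y → G.Adj x y)
    (h1 : ¬ containsCopy (completeBipartiteGraph (Fin (r 0)) (Fin (r 1)))
      (G.induce {x | p x = ⟨0, hq⟩}))
    (hrest : ∀ i : Fin q, i ≠ ⟨0, hq⟩ →
      ¬ containsCopy (completeBipartiteGraph (Fin 1) (Fin (r 1)))
          (G.induce {x | p x = i}) ∧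
      ¬ containsCopy (completeBipartiteGraph (Fin 2) (Fin 2))
          (G.induce {x | p x = i}) ∧
      ¬ containsCopy (⊤ : SimpleGraph (Fin 3)) (G.induce {x | p x = i})) :
    ¬ containsCopy (completeMultipartiteGraph (fun i : Fin (q + 1) => Fin (r i))) G :=
  aux q hq r hpos hmono G p hcross h1 hrest
end

section
/- Let $G$ be a $k$-regular graph on $n$ vertices with smallest adjacency eigenvalue $\lambda_{min}$. Then the dissociation number satisfies $\tau(G) \le \frac{n(1 - \lambda_{min})}{k - \lambda_{min}}$. -/
open SimpleGraph Finset

open Matrix in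
lemma rayleigh_aux {V : Type*} [Fintype V] [DecidableEq V] (A : Matrix V V ℝ)
    (hA : A.IsHermitian) (lmin : ℝ)
    (hl : ∀ μ ∈ {x : ℝ | ∃ f : V → ℝ, f ≠ 0 ∧ A.mulVec f = x • f}, lmin ≤ μ)
    (x : V → ℝ) : lmin * (x ⬝ᵥ x) ≤ x ⬝ᵥ (A *ᵥ x) := by
  have ht : Aᵀ = A := by
    ext i j
    have := congrFun (congrFun hA.eq i) j
    simpa using this
  have hsym : ∀ u : V → ℝ, u ⬝ᵥ (A *ᵥ x) = (A *ᵥ u) ⬝ᵥ x := by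
    intro u
    rw [Matrix.dotProduct_mulVec]
    congr 1
    rw [← Matrix.mulVec_transpose, ht]
  set e := hA.eigenvectorBasis with he
  set μ := hA.eigenvalues with hμ
  have hmem : ∀ i, lmin ≤ μ i := by
    intro i
    apply hl
    refine ⟨⇑(e i), ?_, hA.mulVec_eigenvectorBasis i⟩
    intro h0
    have h2 : (e i : EuclideanSpace ℝ V) = 0 := by simpa using congrArg (WithLp.toLp 2) h0
    have h1 : ‖(e i : EuclideanSpace ℝ V)‖ = 1 := e.orthonormal.1 i
    rw [h2, norm_zero] at h1
    norm_num at h1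
  let y : EuclideanSpace ℝ V := WithLp.toLp 2 x
  let z : EuclideanSpace ℝ V := WithLp.toLp 2 (A *ᵥ x)
  have hinner : ∀ u v : EuclideanSpace ℝ V, (inner ℝ u v : ℝ) = u ⬝ᵥ v := by
    intro u v
    simp [PiLp.inner_apply, dotProduct, mul_comm]
  have hkey : ∀ i, (inner ℝ (e i) z : ℝ) = μ i * (inner ℝ (e i) y : ℝ) := by
    intro i
    rw [hinner, hinner]
    calc (e i : V → ℝ) ⬝ᵥ (A *ᵥ x) = (A *ᵥ ⇑(e i)) ⬝ᵥ x := hsym _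
      _ = (μ i • ⇑(e i)) ⬝ᵥ x := by rw [hA.mulVec_eigenvectorBasis i]
      _ = μ i * ((e i : V → ℝ) ⬝ᵥ x) := smul_dotProduct _ _ _
  have h1 := e.sum_inner_mul_inner y z
  have h2 := e.sum_inner_mul_inner y y
  have hyz : (inner ℝ y z : ℝ) = x ⬝ᵥ (A *ᵥ x) := hinner y z
  have hyy : (inner ℝ y y : ℝ) = x ⬝ᵥ x := hinner y y
  rw [← hyz, ← h1, ← hyy, ← h2, Finset.mul_sum]
  refine Finset.sum_le_sum fun i _ => ?_
  rw [hkey i, real_inner_comm y (e i)]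
  nlinarith [hmem i, mul_self_nonneg (inner ℝ (e i) y : ℝ)]

open Matrix in
open scoped Classical in
theorem stmt18 {V : Type*} [Fintype V] (G : SimpleGraph V) (k : ℕ)
    (hreg : G.IsRegularOfDegree k) (lmin : ℝ)
    (hlmin : IsLeast {x : ℝ | ∃ f : V → ℝ, f ≠ 0 ∧ (G.adjMatrix ℝ).mulVec f = x • f} lmin)
    (hk : lmin < (k : ℝ)) :
    (dissocNum G : ℝ) ≤ (Fintype.card V : ℝ) * (1 - lmin) / ((k : ℝ) - lmin) := by
  classical
  obtain ⟨lf, hlf0, -⟩ := hlmin.1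
  have hV : Nonempty V := by
    by_contra h
    exact hlf0 (funext fun v => absurd ⟨v⟩ h)
  set A := G.adjMatrix ℝ with hAdef
  have hA : A.IsHermitian := by
    ext i j
    simp only [hAdef, Matrix.conjTranspose_apply, SimpleGraph.adjMatrix_apply, star_trivial]
    rw [SimpleGraph.adj_comm]
  -- lmin ≤ 0
  have hlmin0 : lmin ≤ 0 := by
    obtain ⟨v⟩ := hV
    have hr := rayleigh_aux A hA lmin hlmin.2 (Pi.single v 1)
    have hx : Pi.single v (1:ℝ) ⬝ᵥ Pi.single v 1 = 1 := by
      rw [single_dotProduct]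
      simp
    have hAx : Pi.single v (1:ℝ) ⬝ᵥ (A *ᵥ Pi.single v 1) = 0 := by
      rw [single_dotProduct, one_mul, hAdef, SimpleGraph.adjMatrix_mulVec_apply]
      refine Finset.sum_eq_zero fun u hu => ?_
      rw [SimpleGraph.mem_neighborFinset] at hu
      exact Pi.single_eq_of_ne (G.ne_of_adj hu).symm 1
    rw [hx, hAx, mul_one] at hr
    exact hr
  -- get a maximum dissociation set
  have hne : {m | ∃ S : Finset V, IsDissocSet G S ∧ S.card = m}.Nonempty :=
    ⟨0, ∅, fun v hv => absurd hv (Finset.notMem_empty v), Finset.card_empty⟩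
  have hbdd : BddAbove {m | ∃ S : Finset V, IsDissocSet G S ∧ S.card = m} := by
    refine ⟨Fintype.card V, ?_⟩
    rintro m ⟨S, -, rfl⟩
    exact Finset.card_le_univ S
  obtain ⟨S, hS, hcard⟩ := Nat.sSup_mem hne hbdd
  have hdn : (dissocNum G : ℝ) = (S.card : ℝ) := by
    rw [dissocNum, ← hcard]
  rw [hdn]
  set n : ℝ := (Fintype.card V : ℝ) with hn
  set s : ℝ := (S.card : ℝ) with hs
  have hn0 : 0 < n := by
    rw [hn]
    exact_mod_cast Fintype.card_pos
  have hs0 : 0 ≤ s := by positivity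
  set g : V → ℝ := fun v => if v ∈ S then 1 else 0 with hg
  have hsum_ind : ∀ c : ℝ, ∑ v, (if v ∈ S then c else 0) = s * c := by
    intro c
    rw [Finset.sum_ite_mem, Finset.univ_inter, Finset.sum_const, nsmul_eq_mul, hs]
  -- neighbor counts
  have hAg : ∀ v, (A *ᵥ g) v = ((G.neighborFinset v ∩ S).card : ℝ) := by
    intro v
    rw [hAdef, SimpleGraph.adjMatrix_mulVec_apply, hg]
    rw [Finset.sum_ite_mem, Finset.sum_const, nsmul_eq_mul, mul_one]
  set T : ℝ := ∑ v ∈ S, ((G.neighborFinset v ∩ S).card : ℝ) with hT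
  have hT_le : T ≤ s := by
    rw [hT, hs]
    rw [Finset.card_eq_sum_ones S, Nat.cast_sum]
    refine Finset.sum_le_sum fun v hv => ?_
    have h1 := hS v hv
    have h2 : {u | u ∈ S ∧ G.Adj v u} = ↑(G.neighborFinset v ∩ S) := by
      ext u
      simp [SimpleGraph.mem_neighborFinset, and_comm]
    rw [h2, Set.ncard_coe_finset] at h1
    simpa using (Nat.cast_le (α := ℝ)).2 h1
  have hgAg : g ⬝ᵥ (A *ᵥ g) = T := by
    simp only [dotProduct]
    rw [hT]
    calc ∑ v, g v * (A *ᵥ g) v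
        = ∑ v, (if v ∈ S then ((G.neighborFinset v ∩ S).card : ℝ) else 0) := by
          refine Finset.sum_congr rfl fun v _ => ?_
          rw [hAg v]
          by_cases h : v ∈ S <;> simp [hg, h]
      _ = ∑ v ∈ S, ((G.neighborFinset v ∩ S).card : ℝ) := by
          rw [Finset.sum_ite_mem, Finset.univ_inter]
  have hrowsum : ∀ v, ∑ u ∈ G.neighborFinset v, (1:ℝ) = (k : ℝ) := by
    intro v
    rw [Finset.sum_const, nsmul_eq_mul, mul_one, SimpleGraph.card_neighborFinset_eq_degree, hreg v]
  have hoAg : (fun _ : V => (1:ℝ)) ⬝ᵥ (A *ᵥ g) = (k : ℝ) * s := by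
    rw [Matrix.dotProduct_mulVec]
    have hv : (fun _ : V => (1:ℝ)) ᵥ* A = fun _ => (k : ℝ) := by
      ext v
      rw [hAdef, SimpleGraph.adjMatrix_vecMul_apply]
      exact hrowsum v
    rw [hv]
    simp only [dotProduct, hg, mul_ite, mul_one, mul_zero]
    rw [hsum_ind ((k:ℝ))]
    ring
  have hgAo : g ⬝ᵥ (A *ᵥ (fun _ : V => (1:ℝ))) = s * (k : ℝ) := by
    have hv : A *ᵥ (fun _ : V => (1:ℝ)) = fun _ => (k : ℝ) := by
      ext v
      rw [hAdef, SimpleGraph.adjMatrix_mulVec_apply]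
      exact hrowsum v
    rw [hv]
    simp only [dotProduct, hg, ite_mul, one_mul, zero_mul]
    rw [hsum_ind ((k:ℝ))]
  have hoAo : (fun _ : V => (1:ℝ)) ⬝ᵥ (A *ᵥ (fun _ : V => (1:ℝ))) = n * (k : ℝ) := by
    have hv : A *ᵥ (fun _ : V => (1:ℝ)) = fun _ => (k : ℝ) := by
      ext v
      rw [hAdef, SimpleGraph.adjMatrix_mulVec_apply]
      exact hrowsum v
    rw [hv]
    simp only [dotProduct, one_mul]
    rw [Finset.sum_const, nsmul_eq_mul, Finset.card_univ, hn]
  have hgg : g ⬝ᵥ g = s := by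
    simp only [dotProduct, hg, ite_mul, one_mul, zero_mul]
    have : ∀ v : V, (if v ∈ S then (if v ∈ S then (1:ℝ) else 0) else 0) = (if v ∈ S then (1:ℝ) else 0) := by
      intro v; split_ifs <;> rfl
    rw [Finset.sum_congr rfl fun v _ => this v, hsum_ind 1, mul_one]
  have hgo : g ⬝ᵥ (fun _ : V => (1:ℝ)) = s := by
    simp only [dotProduct, hg, ite_mul, one_mul, zero_mul]
    rw [hsum_ind 1, mul_one]
  have hog : (fun _ : V => (1:ℝ)) ⬝ᵥ g = s := by
    simp only [dotProduct, hg, one_mul]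
    rw [hsum_ind 1, mul_one]
  have hoo : (fun _ : V => (1:ℝ)) ⬝ᵥ (fun _ : V => (1:ℝ)) = n := by
    simp only [dotProduct, one_mul]
    rw [Finset.sum_const, nsmul_eq_mul, Finset.card_univ, hn, mul_one]
  -- the test vector
  set f : V → ℝ := n • g - s • (fun _ : V => (1:ℝ)) with hf
  have hAf : A *ᵥ f = n • (A *ᵥ g) - s • (A *ᵥ (fun _ : V => (1:ℝ))) := by
    rw [hf, Matrix.mulVec_sub, Matrix.mulVec_smul, Matrix.mulVec_smul]
  have hff : f ⬝ᵥ f = n * s * (n - s) := by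
    rw [hf]
    simp only [sub_dotProduct, dotProduct_sub, smul_dotProduct,
      dotProduct_smul, smul_eq_mul]
    rw [hgg, hgo, hog, hoo]
    ring
  have hfAf : f ⬝ᵥ (A *ᵥ f) = n ^ 2 * T - n * (k : ℝ) * s ^ 2 := by
    rw [hAf, hf]
    simp only [sub_dotProduct, dotProduct_sub, smul_dotProduct,
      dotProduct_smul, smul_eq_mul]
    rw [hgAg, hgAo, hoAg, hoAo]
    ring
  have hr := rayleigh_aux A hA lmin hlmin.2 f
  rw [hff, hfAf] at hr
  -- conclude
  have hkl : (0:ℝ) < (k : ℝ) - lmin := by linarith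
  rw [le_div_iff₀ hkl]
  rcases eq_or_lt_of_le hs0 with hcase | hcase
  · rw [← hcase]
    have : (0:ℝ) ≤ n * (1 - lmin) := by nlinarith
    linarith
  · have hP : 0 ≤ n * s * (n * (1 - lmin) - s * ((k:ℝ) - lmin)) := by
      nlinarith [mul_le_mul_of_nonneg_left hT_le (by positivity : (0:ℝ) ≤ n ^ 2)]
    have hns : 0 < n * s := mul_pos hn0 hcase
    have hE : 0 ≤ n * (1 - lmin) - s * ((k:ℝ) - lmin) :=
      le_of_not_gt fun hlt => absurd hP (not_le.2 (mul_neg_of_pos_of_neg hns hlt))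
    linarith
end

section
/- Let $G = (V, E)$ be a connected graph with maximum degree $\Delta$. Then the dissociation number satisfies $\tau(G) \ge 2 \left\lceil \sum_{e = \{u,v\} \in E} \frac{1}{(d(u) + d(v))\Delta - 1} \right\rceil$. -/
/-
Greedy version of the random-ordering argument. Pick a remaining edge `uv` of maximum weight
`1 / ((d(u) + d(v))Δ - 1)`, put `u` and `v` into the dissociation set, and discard every edge
within distance 2 of `uv` in the line graph, i.e. every edge meeting `N(u) ∪ N(v)`. Fewer than
`(d(u) + d(v))Δ` edges are discarded (`uv` meets this set twice), each of weight at most that of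
`uv`, so each round gains two vertices while consuming total weight at most 1. No later edge
meets `N(u) ∪ N(v)`, so `u` and `v` stay isolated from the rest of the set.
-/

open SimpleGraph Finset

section

variable {V : Type*} (G : SimpleGraph V)

theorem isDissocSet_iff {S : Finset V} :
    IsDissocSet G S ↔
      ∀ x ∈ S, ∀ y ∈ S, ∀ z ∈ S, G.Adj x y → G.Adj x z → y = z := by
  refine forall₂_congr fun x _ => ?_
  rw [Set.ncard_le_one_iff (S.finite_toSet.subset fun y hy => hy.1)]
  aesop

variable {G}

theorem IsDissocSet.insert_insert [Fintype V] [DecidableEq V] [DecidableRel G.Adj]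
    {S : Finset V} {u v : V} (hS : IsDissocSet G S)
    (hdisj : Disjoint S (G.neighborFinset u ∪ G.neighborFinset v)) :
    IsDissocSet G (insert u (insert v S)) := by
  have hfar : ∀ x ∈ S, ¬G.Adj u x ∧ ¬G.Adj v x := fun x hx => by
    simpa using Finset.disjoint_left.mp hdisj hx
  rw [isDissocSet_iff] at hS ⊢
  have huu : ¬G.Adj u u := G.irrefl
  have hvv : ¬G.Adj v v := G.irrefl
  simp only [Finset.mem_insert]
  grind [G.adj_symm]

theorem le_dissocNum [Fintype V] {S : Finset V} (hS : IsDissocSet G S) : #S ≤ dissocNum G :=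
  le_csSup ⟨Fintype.card V, fun _ ⟨T, _, hT⟩ => hT ▸ T.card_le_univ⟩ ⟨S, hS, rfl⟩

namespace SimpleGraph

variable (G) [Fintype V] [DecidableRel G.Adj]

noncomputable def edgeWeight : Sym2 V → ℝ :=
  Sym2.lift ⟨fun u v => (1 : ℝ) /
      (((G.degree u : ℝ) + (G.degree v : ℝ)) * (G.maxDegree : ℝ) - 1),
    fun u v => by dsimp only; rw [add_comm (G.degree u : ℝ)]⟩

/-- The edges at distance at most 2 from `s(u, v)` in the line graph. -/
def edgesWithinTwo [DecidableEq V] (u v : V) : Finset (Sym2 V) :=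
  (G.neighborFinset u ∪ G.neighborFinset v).biUnion (fun z => G.incidenceFinset z)

variable {G} [DecidableEq V]

/-- The edge `s(x, y)` is counted twice in `∑ z ∈ W, d(z)`. -/
theorem card_biUnion_incidenceFinset_lt {W : Finset V} {x y : V} (hxy : G.Adj x y)
    (hx : x ∈ W) (hy : y ∈ W) :
    #(W.biUnion (fun z => G.incidenceFinset z)) < #W * G.maxDegree := by
  set A := G.incidenceFinset x
  set B := (W.erase x).biUnion (fun z => G.incidenceFinset z)
  have hsplit : W.biUnion (fun z => G.incidenceFinset z) = A ∪ B := by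
    conv_lhs => rw [← insert_erase hx]
    exact biUnion_insert
  have hinter : s(x, y) ∈ A ∩ B := by
    simp only [mem_inter, A, B, mem_biUnion, mem_erase, mem_incidenceFinset]
    exact ⟨⟨hxy, Sym2.mem_mk_left x y⟩, y, ⟨hxy.ne', hy⟩, hxy, Sym2.mem_mk_right x y⟩
  have hdeg (z : V) : #(G.incidenceFinset z) ≤ G.maxDegree :=
    (G.card_incidenceFinset_eq_degree z).trans_le (G.degree_le_maxDegree z)
  have hB : #B ≤ #(W.erase x) * G.maxDegree := card_biUnion_le_card_mul _ _ _ fun z _ => hdeg z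
  have hW : #W = #(W.erase x) + 1 := (card_erase_add_one hx).symm
  have hAB := card_union_add_card_inter A B
  have hAB_pos := card_pos.mpr ⟨_, hinter⟩
  rw [hsplit, hW, add_one_mul]
  linarith [hdeg x]

theorem card_inter_edgesWithinTwo_lt {E : Finset (Sym2 V)} {u v : V} (huv : G.Adj u v) :
    #(E ∩ G.edgesWithinTwo u v) < (G.degree u + G.degree v) * G.maxDegree :=
  calc #(E ∩ G.edgesWithinTwo u v)
      ≤ #(G.edgesWithinTwo u v) := card_le_card inter_subset_right
    _ < #(G.neighborFinset u ∪ G.neighborFinset v) * G.maxDegree :=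
      card_biUnion_incidenceFinset_lt huv
        (mem_union_right _ ((G.mem_neighborFinset v u).mpr huv.symm))
        (mem_union_left _ ((G.mem_neighborFinset u v).mpr huv))
    _ ≤ (G.degree u + G.degree v) * G.maxDegree := Nat.mul_le_mul_right _ (card_union_le _ _)

theorem sum_inter_edgesWithinTwo_edgeWeight_le_one {E : Finset (Sym2 V)} {u v : V}
    (huv : G.Adj u v) (hmax : ∀ f ∈ E, edgeWeight G f ≤ edgeWeight G s(u, v)) :
    ∑ f ∈ E ∩ G.edgesWithinTwo u v, edgeWeight G f ≤ 1 := by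
  set R := E ∩ G.edgesWithinTwo u v
  have hcard : (#R : ℝ) + 1 ≤ ((G.degree u : ℝ) + G.degree v) * G.maxDegree := by
    exact_mod_cast card_inter_edgesWithinTwo_lt huv
  calc ∑ f ∈ R, edgeWeight G f
      ≤ #R • edgeWeight G s(u, v) :=
        sum_le_card_nsmul _ _ _ fun f hf => hmax f (mem_of_mem_inter_left hf)
    _ = #R / (((G.degree u : ℝ) + G.degree v) * G.maxDegree - 1) := by
      simp only [edgeWeight, Sym2.lift_mk, nsmul_eq_mul, mul_one_div]
    _ ≤ 1 := div_le_one_of_le₀ (by linarith) (by linarith [(#R).cast_nonneg (α := ℝ)])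

theorem exists_isDissocSet_sum_edgeWeight_le (E : Finset (Sym2 V)) (hE : E ⊆ G.edgeFinset) :
    ∃ S : Finset V, ∃ k : ℕ, IsDissocSet G S ∧ #S = 2 * k ∧
      (∀ x ∈ S, ∃ f ∈ E, x ∈ f) ∧ ∑ f ∈ E, edgeWeight G f ≤ k := by
  induction E using Finset.strongInduction with | H E ih => ?_
  obtain rfl | hne := E.eq_empty_or_nonempty
  · exact ⟨∅, 0, by simp [isDissocSet_iff], rfl, by simp, by simp⟩
  obtain ⟨e, he, hmax⟩ := E.exists_max_image (edgeWeight G) hne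
  induction e using Sym2.ind with | h u v => ?_
  have huv : G.Adj u v := by simpa using hE he
  set T := G.edgesWithinTwo u v
  have heT : s(u, v) ∈ T := mem_biUnion.mpr
    ⟨v, mem_union_left _ ((G.mem_neighborFinset u v).mpr huv),
      (G.mem_incidenceFinset _ _).mpr ⟨huv, Sym2.mem_mk_right u v⟩⟩
  obtain ⟨S, k, hS, hcard, hcover, hsum⟩ :=
    ih (E \ T) ⟨sdiff_subset, fun h => (mem_sdiff.mp (h he)).2 heT⟩ (sdiff_subset.trans hE)
  have hdisj : Disjoint S (G.neighborFinset u ∪ G.neighborFinset v) := by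
    refine Finset.disjoint_left.mpr fun x hx hxW => ?_
    obtain ⟨f, hf, hxf⟩ := hcover x hx
    rw [mem_sdiff] at hf
    exact hf.2 (mem_biUnion.mpr
      ⟨x, hxW, (G.mem_incidenceFinset _ _).mpr ⟨mem_edgeFinset.mp (hE hf.1), hxf⟩⟩)
  have hv : v ∉ S := Finset.disjoint_left.mp hdisj.symm
    (mem_union_left _ ((G.mem_neighborFinset u v).mpr huv))
  have hu : u ∉ insert v S := by
    rw [mem_insert, not_or]
    exact ⟨huv.ne, Finset.disjoint_left.mp hdisj.symm
      (mem_union_right _ ((G.mem_neighborFinset v u).mpr huv.symm))⟩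
  refine ⟨insert u (insert v S), k + 1, hS.insert_insert hdisj, ?_, ?_, ?_⟩
  · rw [card_insert_of_notMem hu, card_insert_of_notMem hv, hcard]
    ring
  · simp only [mem_insert, forall_eq_or_imp]
    exact ⟨⟨_, he, Sym2.mem_mk_left u v⟩, ⟨_, he, Sym2.mem_mk_right u v⟩,
      fun x hx => (hcover x hx).imp fun f hf => ⟨(mem_sdiff.mp hf.1).1, hf.2⟩⟩
  · have hT := sum_inter_edgesWithinTwo_edgeWeight_le_one huv hmax
    rw [← sum_inter_add_sum_sdiff E T]
    push_cast
    linarith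

end SimpleGraph

end

theorem stmt19 {V : Type*} [Fintype V] (G : SimpleGraph V) [DecidableRel G.Adj] :
    2 * ⌈∑ e ∈ G.edgeFinset,
        Sym2.lift ⟨fun u v => (1 : ℝ) /
            (((G.degree u : ℝ) + (G.degree v : ℝ)) * (G.maxDegree : ℝ) - 1),
          fun u v => by dsimp only; rw [add_comm (G.degree u : ℝ)]⟩ e⌉₊ ≤ dissocNum G := by
  classical
  obtain ⟨S, k, hS, hcard, -, hsum⟩ := G.exists_isDissocSet_sum_edgeWeight_le _ subset_rfl
  calc 2 * ⌈∑ e ∈ G.edgeFinset, G.edgeWeight e⌉₊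
      ≤ 2 * k := Nat.mul_le_mul_left 2 (Nat.ceil_le.mpr hsum)
    _ = #S := hcard.symm
    _ ≤ dissocNum G := le_dissocNum hS
end
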